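/- arXiv:0807.3065 — 2 statements merged into one kernel-verified Lean document; each statement's English description precedes it below -/
import Mathlib

section
/- Let X_i, X_j be {0,1}-valued random variables and Y a random variable. With T_i, T_j, T_{ij} the conditional soft estimates as above, E[(T_{ij} - T_i T_j)²] ≤ 8 I(X_i; X_j | Y), where I is conditional mutual information in nats. -/
open Finset

lemma cs4 (u1 u2 u3 u4 g1 g2 g3 g4 : ℝ) :
    (u1 * g1 + u4 * g4 - u2 * g2 - u3 * g3) ^ 2 ≤
    (u1 ^ 2 + u2 ^ 2 + u3 ^ 2 + u4 ^ 2) * (g1 ^ 2 + g2 ^ 2 + g3 ^ 2 + g4 ^ 2) := by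
  nlinarith [sq_nonneg (u1 * g2 + u2 * g1), sq_nonneg (u1 * g3 + u3 * g1),
    sq_nonneg (u1 * g4 - u4 * g1), sq_nonneg (u2 * g3 - u3 * g2),
    sq_nonneg (u2 * g4 + u4 * g2), sq_nonneg (u3 * g4 + u4 * g3)]

lemma gbound (s q x Q : ℝ) (hs : s ^ 2 = x) (hq : q ^ 2 = Q) :
    (s + q) ^ 2 ≤ 2 * x + 2 * Q := by nlinarith [sq_nonneg (s - q)]

lemma fin8 (X U G L : ℝ) (h1 : X ^ 2 ≤ U * G) (h2 : G ≤ 4) (h3 : 0 ≤ U) (h4 : U ≤ L) :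
    X ^ 2 ≤ 8 * L := by nlinarith

lemma sqrt_ineq (x y : ℝ) (hx : 0 ≤ x) (hy : 0 ≤ y) (h0 : y = 0 → x = 0) :
    x - y + (Real.sqrt x - Real.sqrt y) ^ 2 ≤ x * Real.log (x / y) := by
  rcases hy.eq_or_lt with h | hy'
  · have hx0 : x = 0 := h0 h.symm
    subst hx0; rw [← h]; simp
  rcases hx.eq_or_lt with h | hx'
  · rw [← h]
    simp [Real.sq_sqrt hy]
  have hsx : Real.sqrt x ^ 2 = x := Real.sq_sqrt hx
  have hsy : Real.sqrt y ^ 2 = y := Real.sq_sqrt hy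
  have hsxp : 0 < Real.sqrt x := Real.sqrt_pos.mpr hx'
  have hsyp : 0 < Real.sqrt y := Real.sqrt_pos.mpr hy'
  have hlog : Real.log (Real.sqrt y / Real.sqrt x) ≤ Real.sqrt y / Real.sqrt x - 1 :=
    Real.log_le_sub_one_of_pos (div_pos hsyp hsxp)
  have hld : Real.log (Real.sqrt y / Real.sqrt x) = (Real.log y - Real.log x) / 2 := by
    rw [Real.log_div hsyp.ne' hsxp.ne', Real.log_sqrt hy, Real.log_sqrt hx]; ring
  have hlxy : Real.log (x / y) = Real.log x - Real.log y := Real.log_div hx'.ne' hy'.ne'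
  have key : 2 - 2 * (Real.sqrt y / Real.sqrt x) ≤ Real.log (x / y) := by
    rw [hlxy]; rw [hld] at hlog; linarith
  have hmul : x * (2 - 2 * (Real.sqrt y / Real.sqrt x)) ≤ x * Real.log (x / y) :=
    mul_le_mul_of_nonneg_left key hx
  have h3 : x * (Real.sqrt y / Real.sqrt x) = Real.sqrt x * Real.sqrt y := by
    calc x * (Real.sqrt y / Real.sqrt x) = Real.sqrt y * (x / Real.sqrt x) := by ring
      _ = Real.sqrt y * Real.sqrt x := by rw [Real.div_sqrt]
      _ = Real.sqrt x * Real.sqrt y := by ring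
  nlinarith [hmul, h3, hsx, hsy]

lemma point (P : Bool → Bool → ℝ) (hP : ∀ a b, 0 ≤ P a b)
    (hs : ∑ a, ∑ b, P a b = 1) :
    ((P false false + P true true - P false true - P true false) -
      ((∑ b, P false b) - (∑ b, P true b)) * ((∑ a, P a false) - (∑ a, P a true))) ^ 2 ≤
    8 * ∑ a, ∑ b, P a b * Real.log (P a b / ((∑ b', P a b') * (∑ a', P a' b))) := by
  simp only [Fintype.sum_bool] at hs ⊢
  set A := P false false with hA
  set B := P false true with hB
  set C := P true false with hC
  set D := P true true with hD
  have hA0 : 0 ≤ A := hP false false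
  have hB0 : 0 ≤ B := hP false true
  have hC0 : 0 ≤ C := hP true false
  have hD0 : 0 ≤ D := hP true true
  have hQA0 : 0 ≤ (B + A) * (C + A) := mul_nonneg (by linarith) (by linarith)
  have hQB0 : 0 ≤ (B + A) * (D + B) := mul_nonneg (by linarith) (by linarith)
  have hQC0 : 0 ≤ (D + C) * (C + A) := mul_nonneg (by linarith) (by linarith)
  have hQD0 : 0 ≤ (D + C) * (D + B) := mul_nonneg (by linarith) (by linarith)
  have kA := sqrt_ineq A ((B + A) * (C + A)) hA0 hQA0
    (fun h => by rcases mul_eq_zero.1 h with h' | h' <;> linarith)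
  have kB := sqrt_ineq B ((B + A) * (D + B)) hB0 hQB0
    (fun h => by rcases mul_eq_zero.1 h with h' | h' <;> linarith)
  have kC := sqrt_ineq C ((D + C) * (C + A)) hC0 hQC0
    (fun h => by rcases mul_eq_zero.1 h with h' | h' <;> linarith)
  have kD := sqrt_ineq D ((D + C) * (D + B)) hD0 hQD0
    (fun h => by rcases mul_eq_zero.1 h with h' | h' <;> linarith)
  have h1 : (B + A) + (D + C) = 1 := by linarith
  have h2 : (C + A) + (D + B) = 1 := by linarith
  have hQsum : (B + A) * (C + A) + (B + A) * (D + B) + (D + C) * (C + A)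
      + (D + C) * (D + B) = 1 := by
    linear_combination (C + A + (D + B)) * h1 + h2
  set sA := Real.sqrt A with hsA
  set sB := Real.sqrt B with hsB
  set sC := Real.sqrt C with hsC
  set sD := Real.sqrt D with hsD
  set qA := Real.sqrt ((B + A) * (C + A)) with hqA
  set qB := Real.sqrt ((B + A) * (D + B)) with hqB
  set qC := Real.sqrt ((D + C) * (C + A)) with hqC
  set qD := Real.sqrt ((D + C) * (D + B)) with hqD
  have sA2 : sA ^ 2 = A := Real.sq_sqrt hA0
  have sB2 : sB ^ 2 = B := Real.sq_sqrt hB0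
  have sC2 : sC ^ 2 = C := Real.sq_sqrt hC0
  have sD2 : sD ^ 2 = D := Real.sq_sqrt hD0
  have qA2 : qA ^ 2 = (B + A) * (C + A) := Real.sq_sqrt hQA0
  have qB2 : qB ^ 2 = (B + A) * (D + B) := Real.sq_sqrt hQB0
  have qC2 : qC ^ 2 = (D + C) * (C + A) := Real.sq_sqrt hQC0
  have qD2 : qD ^ 2 = (D + C) * (D + B) := Real.sq_sqrt hQD0
  have hdiff : A + D - B - C - (B + A - (D + C)) * (C + A - (D + B)) =
      (sA - qA) * (sA + qA) + (sD - qD) * (sD + qD)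
      - (sB - qB) * (sB + qB) - (sC - qC) * (sC + qC) := by
    linear_combination -sA2 + qA2 - sD2 + qD2 + sB2 - qB2 + sC2 - qC2
  rw [hdiff]
  have hCS := cs4 (sA - qA) (sB - qB) (sC - qC) (sD - qD) (sA + qA) (sB + qB) (sC + qC) (sD + qD)
  have hG : (sA + qA) ^ 2 + (sB + qB) ^ 2 + (sC + qC) ^ 2 + (sD + qD) ^ 2 ≤ 4 := by
    linarith [gbound sA qA A _ sA2 qA2, gbound sB qB B _ sB2 qB2,
      gbound sC qC C _ sC2 qC2, gbound sD qD D _ sD2 qD2, hs, hQsum]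
  have hU0 : 0 ≤ (sA - qA) ^ 2 + (sB - qB) ^ 2 + (sC - qC) ^ 2 + (sD - qD) ^ 2 := by
    positivity
  have hUL : (sA - qA) ^ 2 + (sB - qB) ^ 2 + (sC - qC) ^ 2 + (sD - qD) ^ 2 ≤
      D * Real.log (D / ((D + C) * (D + B))) + C * Real.log (C / ((D + C) * (C + A))) +
        (B * Real.log (B / ((B + A) * (D + B))) + A * Real.log (A / ((B + A) * (C + A)))) := by
    linarith [kA, kB, kC, kD]
  exact fin8 _ _ _ _ hCS hG hU0 hUL

theorem stmt5 {Y : Type*} [Fintype Y] (ν : Y → ℝ) (hν : ∀ y, 0 ≤ ν y)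
    (hνs : ∑ y, ν y = 1)
    (p : Y → Bool → Bool → ℝ) (hp : ∀ y a b, 0 ≤ p y a b)
    (hps : ∀ y, ∑ a, ∑ b, p y a b = 1) :
    ∑ y, ν y *
        ((p y false false + p y true true - p y false true - p y true false) -
          ((∑ b, p y false b) - (∑ b, p y true b)) *
            ((∑ a, p y a false) - (∑ a, p y a true))) ^ 2 ≤
      8 * ∑ y, ν y * ∑ a, ∑ b,
        p y a b * Real.log (p y a b / ((∑ b', p y a b') * (∑ a', p y a' b))) := by
  rw [Finset.mul_sum]
  apply Finset.sum_le_sum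
  intro y _
  have hpt := point (p y) (hp y) (hps y)
  nlinarith [mul_le_mul_of_nonneg_left hpt (hν y)]
end

section
/- Let t_i, t_j ∈ (-1,1), and let a = ⟨σ_i⟩, b = ⟨σ_j⟩, c = ⟨σ_iσ_j⟩ satisfy the constraints of expectations of ±1-valued variables (so 1 - a t_i - b t_j + c t_i t_j > 0). Define the extrinsic quantities via ⟨σ_iσ_j⟩_{∼ij} - ⟨σ_i⟩_{∼ij}⟨σ_j⟩_{∼ij} using the tilting formulas. Then ⟨σ_iσ_j⟩ - ⟨σ_i⟩⟨σ_j⟩ = (⟨σ_iσ_j⟩_{∼ij} - ⟨σ_i⟩_{∼ij}⟨σ_j⟩_{∼ij}) · R_{ij} where R_{ij} = (1 - a t_i - b t_j + c t_i t_j)² / ((1 - t_i²)(1 - t_j²)). -/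
theorem stmt15 (a b c ti tj : ℝ)
    (ha : a ∈ Set.Icc (-1 : ℝ) 1) (hb : b ∈ Set.Icc (-1 : ℝ) 1) (hc : c ∈ Set.Icc (-1 : ℝ) 1)
    (hti : ti ∈ Set.Ioo (-1 : ℝ) 1) (htj : tj ∈ Set.Ioo (-1 : ℝ) 1)
    (hD : 0 < 1 - a * ti - b * tj + c * ti * tj) :
    c - a * b =
      ((c - ti * b - a * tj + ti * tj) / (1 - a * ti - b * tj + c * ti * tj) -
          ((a - ti - c * tj + ti * tj * b) / (1 - a * ti - b * tj + c * ti * tj)) *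
            ((b - tj - c * ti + ti * tj * a) / (1 - a * ti - b * tj + c * ti * tj))) *
        ((1 - a * ti - b * tj + c * ti * tj) ^ 2 / ((1 - ti ^ 2) * (1 - tj ^ 2))) := by
  obtain ⟨h1, h2⟩ := hti
  obtain ⟨h3, h4⟩ := htj
  have hD' : (1 - a * ti - b * tj + c * ti * tj) ≠ 0 := ne_of_gt hD
  have hi : (1 - ti ^ 2) ≠ 0 := by nlinarith
  have hj : (1 - tj ^ 2) ≠ 0 := by nlinarith
  field_simp
  ring
end
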